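/- arXiv:0910.3705 — 2 statements merged into one kernel-verified Lean document; each statement's English description precedes it below -/
import Mathlib

section
/- If all Aᵢ are positive semidefinite, then the resolvent average R_μ(A,λ) is positive semidefinite; if moreover some A_j is positive definite, then R_μ(A,λ) is positive definite. -/
/-!
Write `Bᵢ = Aᵢ + μ⁻¹ • 1`, so `Bᵢ - μ⁻¹ • 1 = Aᵢ ≥ 0`. For a positive definite `B` and `c > 0`,
conjugating by `√B` turns `c • 1 - B⁻¹` into `c • (B - c⁻¹ • 1)`, so `c • 1 - B⁻¹` and
`B - c⁻¹ • 1` are positive (semi)definite together. Applied to each `Bᵢ` this gives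
`μ • 1 - Bᵢ⁻¹ ≥ 0`; averaging, `S = ∑ wᵢ • Bᵢ⁻¹` is positive definite with `μ • 1 - S ≥ 0`, and
applied once more to `S⁻¹` it gives `S⁻¹ - μ⁻¹ • 1 ≥ 0`. A positive definite `Aⱼ` makes the
`j`-th term of `μ • 1 - S` positive definite, and strictness survives both inversions.
-/

open Matrix

namespace Matrix

open scoped MatrixOrder ComplexOrder

variable {n 𝕜 : Type*} [RCLike 𝕜]

lemma posSemidef_smul_iff {c : ℝ} (hc : 0 < c) {M : Matrix n n 𝕜} :
    (c • M).PosSemidef ↔ M.PosSemidef := by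
  refine ⟨fun h => ?_, fun h => h.smul hc.le⟩
  simpa [smul_smul, inv_mul_cancel₀ hc.ne'] using h.smul (inv_nonneg.2 hc.le)

lemma posDef_smul_iff {c : ℝ} (hc : 0 < c) {M : Matrix n n 𝕜} :
    (c • M).PosDef ↔ M.PosDef := by
  refine ⟨fun h => ?_, fun h => h.smul hc⟩
  simpa [smul_smul, inv_mul_cancel₀ hc.ne'] using h.smul (inv_pos.2 hc)

lemma posDef_sum_of_posSemidef_of_posDef {ι : Type*} {s : Finset ι} {x : ι → Matrix n n 𝕜}
    (hx : ∀ i ∈ s, (x i).PosSemidef) {j : ι} (hj : j ∈ s) (hxj : (x j).PosDef) :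
    (∑ i ∈ s, x i).PosDef := by
  classical
  rw [← Finset.add_sum_erase s x hj]
  exact hxj.add_posSemidef (posSemidef_sum _ fun i hi => hx i (Finset.mem_of_mem_erase hi))

variable [Fintype n] [DecidableEq n]

lemma mul_smul_one_sub_inv_mul_self_mul {s : Matrix n n 𝕜} (hs : IsUnit s) {c : ℝ} (hc : c ≠ 0) :
    s * (c • 1 - (s * s)⁻¹) * s = c • (s * s - c⁻¹ • 1) := by
  have hsi : s * s⁻¹ = 1 := mul_nonsing_inv s ((isUnit_iff_isUnit_det s).mp hs)
  have his : s⁻¹ * s = 1 := nonsing_inv_mul s ((isUnit_iff_isUnit_det s).mp hs)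
  calc s * (c • 1 - (s * s)⁻¹) * s = c • (s * s) - 1 := by
        simp only [mul_inv_rev, Matrix.mul_sub, Matrix.sub_mul, Matrix.mul_smul, Matrix.smul_mul,
          Matrix.mul_one, Matrix.mul_assoc, his, hsi]
    _ = c • (s * s - c⁻¹ • 1) := by rw [smul_sub, smul_smul, mul_inv_cancel₀ hc, one_smul]

lemma PosDef.exists_isUnit_isSelfAdjoint_mul_self_eq {B : Matrix n n 𝕜} (hB : B.PosDef) :
    ∃ s, IsUnit s ∧ IsSelfAdjoint s ∧ s * s = B :=
  ⟨CFC.sqrt B, (CFC.isUnit_sqrt_iff B hB.posSemidef.nonneg).2 hB.isUnit,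
    .of_nonneg (CFC.sqrt_nonneg B), CFC.sqrt_mul_sqrt_self B hB.posSemidef.nonneg⟩

lemma PosDef.posSemidef_smul_one_sub_inv_iff {B : Matrix n n 𝕜} (hB : B.PosDef) {c : ℝ}
    (hc : 0 < c) : (c • 1 - B⁻¹).PosSemidef ↔ (B - c⁻¹ • 1).PosSemidef := by
  obtain ⟨s, hs, hss, rfl⟩ := hB.exists_isUnit_isSelfAdjoint_mul_self_eq
  rw [← hs.posSemidef_star_right_conjugate_iff, hss.star_eq,
    mul_smul_one_sub_inv_mul_self_mul hs hc.ne', posSemidef_smul_iff hc]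

lemma PosDef.posDef_smul_one_sub_inv_iff {B : Matrix n n 𝕜} (hB : B.PosDef) {c : ℝ}
    (hc : 0 < c) : (c • 1 - B⁻¹).PosDef ↔ (B - c⁻¹ • 1).PosDef := by
  obtain ⟨s, hs, hss, rfl⟩ := hB.exists_isUnit_isSelfAdjoint_mul_self_eq
  rw [← hs.posDef_star_right_conjugate_iff, hss.star_eq,
    mul_smul_one_sub_inv_mul_self_mul hs hc.ne', posDef_smul_iff hc]

end Matrix

theorem resolvent_average_posSemidef (N n : ℕ)
    (A : Fin n → Matrix (Fin N) (Fin N) ℝ) (w : Fin n → ℝ) (μ : ℝ)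
    (hA : ∀ i, (A i).PosSemidef)
    (hw : ∀ i, 0 < w i) (hw1 : ∑ i, w i = 1) (hμ : 0 < μ) :
    ((∑ i, w i • (A i + μ⁻¹ • 1)⁻¹)⁻¹ - μ⁻¹ • (1 : Matrix (Fin N) (Fin N) ℝ)).PosSemidef
    ∧ ((∃ j, (A j).PosDef) →
      ((∑ i, w i • (A i + μ⁻¹ • 1)⁻¹)⁻¹ - μ⁻¹ • (1 : Matrix (Fin N) (Fin N) ℝ)).PosDef) := by
  set B : Fin n → Matrix (Fin N) (Fin N) ℝ := fun i => A i + μ⁻¹ • 1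
  have hB : ∀ i, (B i).PosDef := fun i => (PosDef.one.smul (inv_pos.2 hμ)).posSemidef_add (hA i)
  have hBA : ∀ i, B i - μ⁻¹ • 1 = A i := fun i => add_sub_cancel_right _ _
  have hgap : ∀ i, (w i • (μ • 1 - (B i)⁻¹)).PosSemidef := fun i =>
    (((hB i).posSemidef_smul_one_sub_inv_iff hμ).2 (hBA i ▸ hA i)).smul (hw i).le
  set S := ∑ i, w i • (B i)⁻¹
  have hS : S.PosDef := posDef_sum (Finset.univ.nonempty_of_sum_ne_zero (hw1 ▸ one_ne_zero))
    fun i _ => (hB i).inv.smul (hw i)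
  have hSS : S⁻¹⁻¹ = S := nonsing_inv_nonsing_inv S ((isUnit_iff_isUnit_det S).1 hS.isUnit)
  have hSB : μ • 1 - S = ∑ i, w i • (μ • 1 - (B i)⁻¹) := by
    simp only [smul_sub, Finset.sum_sub_distrib, ← Finset.sum_smul, hw1, one_smul, S]
  refine ⟨(hS.inv.posSemidef_smul_one_sub_inv_iff hμ).1 ?_,
    fun ⟨j, hj⟩ => (hS.inv.posDef_smul_one_sub_inv_iff hμ).1 ?_⟩ <;> rw [hSS, hSB]
  · exact posSemidef_sum _ fun i _ => hgap i
  · exact posDef_sum_of_posSemidef_of_posDef (fun i _ => hgap i) (Finset.mem_univ j)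
      ((((hB j).posDef_smul_one_sub_inv_iff hμ).2 (hBA j ▸ hj)).smul (hw j))
end

section
/- The resolvent average is matrix concave in the tuple of matrices: for positive definite tuples A and B, weights λ, μ > 0, and t ∈ [0,1], R_μ(tA + (1−t)B, λ) ⪰ t·R_μ(A,λ) + (1−t)·R_μ(B,λ). -/
/-!
The weighted harmonic mean `H(M) = (∑ wᵢ Mᵢ⁻¹)⁻¹` is the minimum of `∑ wᵢ Yᵢᴴ Mᵢ Yᵢ` over all
tuples `Y` with `∑ wᵢ Yᵢ = 1`: the lower bound is the positivity of
`∑ wᵢ (Yᵢ - Mᵢ⁻¹ H)ᴴ Mᵢ (Yᵢ - Mᵢ⁻¹ H)`, and `Yᵢ = Mᵢ⁻¹ H` attains it. Being a minimum of functions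
that are linear in `M`, `H` is concave. The resolvent average is `H` evaluated at the shifted tuple
`Mᵢ + μ⁻¹` minus `μ⁻¹`, and this affine change of variables preserves concavity.
-/

open Matrix
open scoped MatrixOrder ComplexOrder

namespace Matrix

variable {𝕜 ι n : Type*} [RCLike 𝕜]

lemma PosDef.smul_add_one_sub_smul {A B : Matrix n n 𝕜} (hA : A.PosDef) (hB : B.PosDef) {t : ℝ}
    (ht0 : 0 ≤ t) (ht1 : t ≤ 1) : (t • A + (1 - t) • B).PosDef := by
  rcases ht0.eq_or_lt with rfl | ht
  · simpa using hB
  · exact (hA.smul ht).add_posSemidef (hB.posSemidef.smul (sub_nonneg.2 ht1))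

variable [Fintype ι] [Fintype n] [DecidableEq n]

noncomputable def weightedHarmonicMean (w : ι → ℝ) (M : ι → Matrix n n 𝕜) : Matrix n n 𝕜 :=
  (∑ i, w i • (M i)⁻¹)⁻¹

lemma nonsing_inv_mul_mul_nonsing_inv {α : Type*} [CommRing α] (A : Matrix n n α) :
    A⁻¹ * A * A⁻¹ = A⁻¹ := by
  rcases nonsing_inv_cancel_or_zero A with ⟨h, -⟩ | h
  · rw [h, Matrix.one_mul]
  · rw [h, Matrix.zero_mul, Matrix.zero_mul]

lemma conjTranspose_sub_inv_mul_mul_sub_inv_mul {M H : Matrix n n 𝕜} (hM : M.IsHermitian)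
    (hdet : IsUnit M.det) (hH : H.IsHermitian) (Y : Matrix n n 𝕜) :
    (Y - M⁻¹ * H)ᴴ * M * (Y - M⁻¹ * H) = Yᴴ * M * Y - Yᴴ * H - H * Y + H * M⁻¹ * H := by
  rw [conjTranspose_sub, conjTranspose_mul, hH.eq, hM.inv.eq]
  simp only [Matrix.sub_mul, Matrix.mul_sub, Matrix.mul_assoc,
    mul_nonsing_inv_cancel_left _ _ hdet, nonsing_inv_mul_cancel_left _ _ hdet]
  abel

lemma sum_smul_weightedHarmonicMean_mul_inv_mul (w : ι → ℝ) (M : ι → Matrix n n 𝕜) :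
    ∑ i, w i • (weightedHarmonicMean w M * (M i)⁻¹ * weightedHarmonicMean w M) =
      weightedHarmonicMean w M := by
  have hterm : ∀ i, w i • (weightedHarmonicMean w M * (M i)⁻¹ * weightedHarmonicMean w M) =
      weightedHarmonicMean w M * (w i • (M i)⁻¹) * weightedHarmonicMean w M := fun i => by
    rw [mul_smul_comm, smul_mul_assoc]
  simp_rw [hterm, ← Finset.sum_mul, ← Finset.mul_sum]
  exact nonsing_inv_mul_mul_nonsing_inv _

theorem weightedHarmonicMean_le_sum_conjTranspose_mul_mul {w : ι → ℝ} {M : ι → Matrix n n 𝕜}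
    (hw : ∀ i, 0 ≤ w i) (hM : ∀ i, (M i).PosDef) {Y : ι → Matrix n n 𝕜} (hY : ∑ i, w i • Y i = 1) :
    weightedHarmonicMean w M ≤ ∑ i, w i • ((Y i)ᴴ * M i * Y i) := by
  have hHSH := sum_smul_weightedHarmonicMean_mul_inv_mul w M
  set H := weightedHarmonicMean w M
  have hH : H.IsHermitian :=
    (posSemidef_sum _ fun i _ => (hM i).inv.posSemidef.smul (hw i)).inv.isHermitian
  have hYH : ∑ i, w i • ((Y i)ᴴ * H) = H := by
    have hYt : ∑ i, w i • (Y i)ᴴ = 1 := by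
      simpa [conjTranspose_sum, conjTranspose_smul] using congrArg conjTranspose hY
    simp_rw [← smul_mul_assoc, ← Finset.sum_mul, hYt, Matrix.one_mul]
  have hHY : ∑ i, w i • (H * Y i) = H := by
    simp_rw [← mul_smul_comm, ← Finset.mul_sum, hY, Matrix.mul_one]
  rw [le_iff]
  convert posSemidef_sum Finset.univ fun i _ =>
    ((hM i).posSemidef.conjTranspose_mul_mul_same (Y i - (M i)⁻¹ * H)).smul (hw i) using 1
  simp only [conjTranspose_sub_inv_mul_mul_sub_inv_mul (hM _).isHermitian
    ((hM _).isUnit.map detMonoidHom) hH, smul_add, smul_sub,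
    Finset.sum_add_distrib, Finset.sum_sub_distrib, hYH, hHY, hHSH]
  abel

theorem weightedHarmonicMean_concave {w : ι → ℝ} (hw : ∀ i, 0 < w i) {A B : ι → Matrix n n 𝕜}
    (hA : ∀ i, (A i).PosDef) (hB : ∀ i, (B i).PosDef) {t : ℝ} (ht0 : 0 ≤ t) (ht1 : t ≤ 1) :
    t • weightedHarmonicMean w A + (1 - t) • weightedHarmonicMean w B ≤
      weightedHarmonicMean w (t • A + (1 - t) • B) := by
  rcases isEmpty_or_nonempty ι with hι | hι
  · simp [weightedHarmonicMean]
  set C := t • A + (1 - t) • B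
  have hC : ∀ i, (C i).PosDef := fun i => (hA i).smul_add_one_sub_smul (hB i) ht0 ht1
  set H := weightedHarmonicMean w C
  set Y := fun i => (C i)⁻¹ * H
  have hS : (∑ i, w i • (C i)⁻¹).PosDef :=
    posDef_sum Finset.univ_nonempty fun i _ => (hC i).inv.smul (hw i)
  have hY : ∑ i, w i • Y i = 1 := by
    simp_rw [Y, ← smul_mul_assoc, ← Finset.sum_mul]
    exact mul_nonsing_inv _ (hS.isUnit.map detMonoidHom)
  have hH : ∑ i, w i • ((Y i)ᴴ * C i * Y i) = H := by
    have hHerm : H.IsHermitian := hS.inv.isHermitian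
    have hterm : ∀ i, (Y i)ᴴ * C i * Y i = H * (C i)⁻¹ * H := fun i => by
      simp only [Y, conjTranspose_mul, hHerm.eq, (hC i).isHermitian.inv.eq, Matrix.mul_assoc,
        mul_nonsing_inv_cancel_left _ _ ((hC i).isUnit.map detMonoidHom)]
    simp_rw [hterm]
    exact sum_smul_weightedHarmonicMean_mul_inv_mul w C
  have hw₀ : ∀ i, 0 ≤ w i := fun i => (hw i).le
  calc t • weightedHarmonicMean w A + (1 - t) • weightedHarmonicMean w B
      ≤ t • ∑ i, w i • ((Y i)ᴴ * A i * Y i) + (1 - t) • ∑ i, w i • ((Y i)ᴴ * B i * Y i) := by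
        gcongr
        · exact weightedHarmonicMean_le_sum_conjTranspose_mul_mul hw₀ hA hY
        · exact weightedHarmonicMean_le_sum_conjTranspose_mul_mul hw₀ hB hY
    _ = ∑ i, w i • ((Y i)ᴴ * C i * Y i) := by
        simp only [C, Finset.smul_sum, ← Finset.sum_add_distrib, Pi.add_apply, Pi.smul_apply,
          Matrix.add_mul, Matrix.mul_add, smul_mul_assoc, mul_smul_comm, smul_add, smul_comm t,
          smul_comm (1 - t)]
    _ = H := hH

noncomputable def resolventAverage (w : ι → ℝ) (μ : ℝ) (M : ι → Matrix n n 𝕜) : Matrix n n 𝕜 :=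
  weightedHarmonicMean w (fun i => M i + μ⁻¹ • 1) - μ⁻¹ • 1

theorem resolventAverage_concave {w : ι → ℝ} (hw : ∀ i, 0 < w i) {μ : ℝ} (hμ : 0 < μ)
    {A B : ι → Matrix n n 𝕜} (hA : ∀ i, (A i).PosDef) (hB : ∀ i, (B i).PosDef) {t : ℝ}
    (ht0 : 0 ≤ t) (ht1 : t ≤ 1) :
    t • resolventAverage w μ A + (1 - t) • resolventAverage w μ B ≤
      resolventAverage w μ (t • A + (1 - t) • B) := by
  have hshift : (μ⁻¹ • (1 : Matrix n n 𝕜)).PosDef := PosDef.one.smul (inv_pos.2 hμ)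
  have hconcave := weightedHarmonicMean_concave hw (fun i => (hA i).add hshift)
    (fun i => (hB i).add hshift) ht0 ht1
  have hcomb : t • (fun i => A i + μ⁻¹ • (1 : Matrix n n 𝕜)) + (1 - t) • (fun i => B i + μ⁻¹ • 1) =
      fun i => (t • A + (1 - t) • B) i + μ⁻¹ • 1 := by
    funext i
    simp only [Pi.add_apply, Pi.smul_apply]
    module
  rw [hcomb] at hconcave
  calc t • resolventAverage w μ A + (1 - t) • resolventAverage w μ B
      = t • weightedHarmonicMean w (fun i => A i + μ⁻¹ • 1) +
          (1 - t) • weightedHarmonicMean w (fun i => B i + μ⁻¹ • 1) - μ⁻¹ • 1 := by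
        simp only [resolventAverage]
        module
    _ ≤ resolventAverage w μ (t • A + (1 - t) • B) := sub_le_sub_right hconcave _

end Matrix

theorem resolvent_average_matrix_concave_general (N n : ℕ)
    (A B : Fin n → Matrix (Fin N) (Fin N) ℝ) (w : Fin n → ℝ) (μ : ℝ)
    (hA : ∀ i, (A i).PosDef) (hB : ∀ i, (B i).PosDef)
    (hw : ∀ i, 0 < w i) (hμ : 0 < μ)
    (t : ℝ) (ht0 : 0 ≤ t) (ht1 : t ≤ 1) :
    (((∑ i, w i • (t • A i + (1 - t) • B i + μ⁻¹ • 1)⁻¹)⁻¹ - μ⁻¹ • (1 : Matrix (Fin N) (Fin N) ℝ))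
      - (t • ((∑ i, w i • (A i + μ⁻¹ • 1)⁻¹)⁻¹ - μ⁻¹ • 1)
        + (1 - t) • ((∑ i, w i • (B i + μ⁻¹ • 1)⁻¹)⁻¹ - μ⁻¹ • 1))).PosSemidef :=
  le_iff.mp (resolventAverage_concave hw hμ hA hB ht0 ht1)

theorem resolvent_average_matrix_concave (N n : ℕ)
    (A B : Fin n → Matrix (Fin N) (Fin N) ℝ) (w : Fin n → ℝ) (μ : ℝ)
    (hA : ∀ i, (A i).PosDef) (hB : ∀ i, (B i).PosDef)
    (hw : ∀ i, 0 < w i) (hw1 : ∑ i, w i = 1) (hμ : 0 < μ)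
    (t : ℝ) (ht0 : 0 ≤ t) (ht1 : t ≤ 1) :
    (((∑ i, w i • (t • A i + (1 - t) • B i + μ⁻¹ • 1)⁻¹)⁻¹ - μ⁻¹ • (1 : Matrix (Fin N) (Fin N) ℝ))
      - (t • ((∑ i, w i • (A i + μ⁻¹ • 1)⁻¹)⁻¹ - μ⁻¹ • 1)
        + (1 - t) • ((∑ i, w i • (B i + μ⁻¹ • 1)⁻¹)⁻¹ - μ⁻¹ • 1))).PosSemidef :=
  resolvent_average_matrix_concave_general N n A B w μ hA hB hw hμ t ht0 ht1
end
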